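/- Every bounded Loeb-measurable function f : X → [-d,d] on the ultraproduct of finite sets is almost everywhere equal to an ultraproduct function, i.e., there exist functions f_i : X_i → [-d,d] with lim_ω f_i = f μ-almost everywhere. -/

import Mathlib

open Filter Set MeasureTheory

/-- The equivalence relation of `ω`-almost-everywhere equality on `∏ᵢ Xᵢ`. -/
def upSetoid (X : ℕ → Type) (ω : Ultrafilter ℕ) : Setoid (∀ i, X i) where
  r p q := {i | p i = q i} ∈ ω
  iseqv := by
    refine ⟨fun p => ?_, fun {p q} h => ?_, fun {p q r} h₁ h₂ => ?_⟩
    · simp only [eq_self_iff_true, Set.setOf_true]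
      exact Filter.univ_mem
    · exact Filter.mem_of_superset h (fun i hi => hi.symm)
    · exact Filter.mem_of_superset (Filter.inter_mem h₁ h₂)
        (fun i hi => hi.1.trans hi.2)

/-- The ultraproduct `X = (∏ᵢ Xᵢ)/∼` of the sets `Xᵢ` along the ultrafilter `ω`. -/
def UProd (X : ℕ → Type) (ω : Ultrafilter ℕ) : Type := Quotient (upSetoid X ω)

/-- The internal (ultraproduct) subset `[{Aᵢ}] ⊆ X` determined by sets `Aᵢ ⊆ Xᵢ`. -/
def internalSet (X : ℕ → Type) (ω : Ultrafilter ℕ) (A : ∀ i, Finset (X i)) :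
    Set (UProd X ω) :=
  {x | Quotient.liftOn x (fun p => {i | p i ∈ A i} ∈ ω) (by
    intro p q h
    refine propext ⟨fun hp => ?_, fun hq => ?_⟩
    · exact Filter.mem_of_superset (Filter.inter_mem h hp)
        (fun i hi => by rw [Set.mem_setOf_eq, ← hi.1]; exact hi.2)
    · exact Filter.mem_of_superset (Filter.inter_mem h hq)
        (fun i hi => by rw [Set.mem_setOf_eq, hi.1]; exact hi.2))}

/-- The ultralimit of a real sequence along the ultrafilter `ω`. -/
noncomputable def ulim (ω : Ultrafilter ℕ) (a : ℕ → ℝ) : ℝ :=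
  limUnder (ω : Filter ℕ) a

/-- The finitely additive measure of an internal set: `μ([{Aᵢ}]) = lim_ω |Aᵢ|/|Xᵢ|`. -/
noncomputable def intMeasure (X : ℕ → Type) [∀ i, Fintype (X i)] (ω : Ultrafilter ℕ)
    (A : ∀ i, Finset (X i)) : ℝ :=
  ulim ω (fun i => ((A i).card : ℝ) / (Fintype.card (X i) : ℝ))

/-- A set `N ⊆ X` in the ultraproduct is a *nullset* if for every `ε > 0` it is covered by
an internal set of measure at most `ε`. -/
def IsNull (X : ℕ → Type) [∀ i, Fintype (X i)] (ω : Ultrafilter ℕ)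
    (N : Set (UProd X ω)) : Prop :=
  ∀ ε : ℝ, 0 < ε → ∃ A : ∀ i, Finset (X i),
    N ⊆ internalSet X ω A ∧ intMeasure X ω A ≤ ε

/-- The Loeb σ-algebra on the ultraproduct: the σ-algebra generated by the sets that agree
with an internal set up to a nullset (by the Loeb construction, this collection is itself
a σ-algebra). -/
def loebSpace (X : ℕ → Type) [∀ i, Fintype (X i)] (ω : Ultrafilter ℕ) :
    MeasurableSpace (UProd X ω) :=
  MeasurableSpace.generateFrom
    {B | ∃ A : ∀ i, Finset (X i), IsNull X ω (symmDiff B (internalSet X ω A))}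

/-- A measure on the Loeb σ-algebra is a *Loeb measure* if it is a probability measure
assigning to every internal set `[{Aᵢ}]` the value `lim_ω |Aᵢ|/|Xᵢ|`. -/
def IsLoebMeasure (X : ℕ → Type) [∀ i, Fintype (X i)] (ω : Ultrafilter ℕ)
    (ν : @MeasureTheory.Measure (UProd X ω) (loebSpace X ω)) : Prop :=
  @MeasureTheory.IsProbabilityMeasure (UProd X ω) (loebSpace X ω) ν ∧
  ∀ A : ∀ i, Finset (X i), ν (internalSet X ω A) = ENNReal.ofReal (intMeasure X ω A)

/-- The ultraproduct of a uniformly bounded family of functions `fᵢ : Xᵢ → ℝ`: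
`f([(pᵢ)]) = lim_ω fᵢ(pᵢ)`. -/
noncomputable def uprodFun (X : ℕ → Type) (ω : Ultrafilter ℕ)
    (f : ∀ i, X i → ℝ) : UProd X ω → ℝ :=
  Quotient.lift (fun p => ulim ω (fun i => f i (p i))) (by
    intro p q h
    have he : (fun i => f i (p i)) =ᶠ[(ω : Filter ℕ)] (fun i => f i (q i)) :=
      Filter.mem_of_superset h (fun i hi => congrArg (f i) hi)
    show lim (Filter.map (fun i => f i (p i)) (ω : Filter ℕ)) =
      lim (Filter.map (fun i => f i (q i)) (ω : Filter ℕ))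
    rw [Filter.map_congr he])


/-!
Every Loeb-measurable set agrees with an internal set up to a null set: the sets with this
property form a σ-algebra, and the only nontrivial case, countable unions, is countable
saturation (an increasing sequence of internal sets of measure `≤ s` lies in a single internal
set of measure `≤ s`). Hence every simple function is a.e. an ultraproduct function. Now `f` is
a uniform limit of simple functions `sₙ` with `|sₙ - f| ≤ 2⁻ⁿ`; if `hₙ` represents `sₙ`, the
diagonal family which at stage `i` follows `n ↦ hₙ` up to the last `n ≤ i` before a step
`hₗ₊₁ - hₗ` exceeds `2¹⁻ˡ` represents `f`.
-/

open Topology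

instance (X : ℕ → Type) [∀ i, Fintype (X i)] (ω : Ultrafilter ℕ) :
    MeasurableSpace (UProd X ω) :=
  loebSpace X ω

section Ultralimit

variable {ω : Ultrafilter ℕ}

theorem tendsto_ulim_of_isCompact {a : ℕ → ℝ} {K : Set ℝ} (hK : IsCompact K)
    (ha : ∀ᶠ i in (ω : Filter ℕ), a i ∈ K) : Tendsto a ω (𝓝 (ulim ω a)) := by
  obtain ⟨y, -, hy⟩ := hK.ultrafilter_le_nhds (ω.map a) (le_principal_iff.2 ha)
  have hy : Tendsto a ω (𝓝 y) := hy
  rwa [ulim, hy.limUnder_eq]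

theorem eventually_ge_of_le_cofinite (hω : (ω : Filter ℕ) ≤ cofinite) (n : ℕ) :
    ∀ᶠ i in (ω : Filter ℕ), n ≤ i :=
  hω (by rw [Nat.cofinite_eq_atTop]; exact eventually_ge_atTop n)

end Ultralimit

section Internal

variable {X : ℕ → Type} {ω : Ultrafilter ℕ}

def UProd.mk (p : ∀ i, X i) : UProd X ω := Quotient.mk (upSetoid X ω) p

theorem UProd.exists_mk (x : UProd X ω) : ∃ p, UProd.mk p = x :=
  Quotient.exists_rep x

theorem mem_internalSet_mk {A : ∀ i, Finset (X i)} {p : ∀ i, X i} :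
    UProd.mk p ∈ internalSet X ω A ↔ ∀ᶠ i in (ω : Filter ℕ), p i ∈ A i :=
  Iff.rfl

theorem eventually_mem_iff_mem_internalSet (A : ∀ i, Finset (X i)) (p : ∀ i, X i) :
    ∀ᶠ i in (ω : Filter ℕ), (p i ∈ A i ↔ UProd.mk p ∈ internalSet X ω A) := by
  by_cases hp : UProd.mk p ∈ internalSet X ω A
  · exact (mem_internalSet_mk.1 hp).mono fun i hi => iff_of_true hi hp
  · exact (ω.eventually_not.2 (mt mem_internalSet_mk.2 hp)).mono fun i hi => iff_of_false hi hp

theorem internalSet_mono {A B : ∀ i, Finset (X i)} (h : A ≤ B) :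
    internalSet X ω A ⊆ internalSet X ω B := by
  intro x hx
  obtain ⟨p, rfl⟩ := x.exists_mk
  exact mem_internalSet_mk.2 <| (mem_internalSet_mk.1 hx).mono fun i hi => h i hi

theorem internalSet_empty : internalSet X ω (fun _ => ∅) = ∅ := by
  ext x
  obtain ⟨p, rfl⟩ := x.exists_mk
  simp [mem_internalSet_mk, ω.neBot.ne]

theorem internalSet_compl [∀ i, Fintype (X i)] [∀ i, DecidableEq (X i)]
    (A : ∀ i, Finset (X i)) :
    internalSet X ω (fun i => (A i)ᶜ) = (internalSet X ω A)ᶜ := by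
  ext x
  obtain ⟨p, rfl⟩ := x.exists_mk
  simp only [mem_compl_iff, mem_internalSet_mk, Finset.mem_compl, ω.eventually_not]

theorem internalSet_biUnion [∀ i, DecidableEq (X i)] {ι : Type*} (S : Finset ι)
    (A : ι → ∀ i, Finset (X i)) :
    internalSet X ω (fun i => S.biUnion fun n => A n i) = ⋃ n ∈ S, internalSet X ω (A n) := by
  ext x
  obtain ⟨p, rfl⟩ := x.exists_mk
  simp only [mem_iUnion, mem_internalSet_mk, Finset.mem_biUnion, exists_prop]
  exact ω.eventually_exists_mem_iff S.finite_toSet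

theorem uprodFun_mk_eq_of_eventually_eq {g : ∀ i, X i → ℝ} {p : ∀ i, X i} {c : ℝ}
    (h : ∀ᶠ i in (ω : Filter ℕ), g i (p i) = c) : uprodFun X ω g (UProd.mk p) = c :=
  (tendsto_const_nhds.congr' (h.mono fun _ hi => hi.symm)).limUnder_eq

theorem tendsto_uprodFun_mk {g : ∀ i, X i → ℝ} {a b : ℝ} (hg : ∀ i q, g i q ∈ Icc a b)
    (p : ∀ i, X i) : Tendsto (fun i => g i (p i)) ω (𝓝 (uprodFun X ω g (UProd.mk p))) :=
  tendsto_ulim_of_isCompact isCompact_Icc (Eventually.of_forall fun i => hg i (p i))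

end Internal

section Loeb

variable {X : ℕ → Type} [∀ i, Fintype (X i)] {ω : Ultrafilter ℕ}

theorem tendsto_dens_intMeasure (A : ∀ i, Finset (X i)) :
    Tendsto (fun i => ((A i).dens : ℝ)) ω (𝓝 (intMeasure X ω A)) := by
  have h01 : ∀ i, ((A i).dens : ℝ) ∈ Icc 0 1 :=
    fun i => ⟨by positivity, by exact_mod_cast (A i).dens_le_one⟩
  have := tendsto_ulim_of_isCompact (ω := ω) isCompact_Icc (Eventually.of_forall h01)
  rw [intMeasure]
  simpa only [Finset.nnratCast_dens] using this

theorem intMeasure_empty : intMeasure X ω (fun _ => ∅) = 0 := by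
  simp only [intMeasure, Finset.card_empty, Nat.cast_zero, zero_div]
  exact tendsto_const_nhds.limUnder_eq

theorem isNull_empty : IsNull X ω ∅ :=
  fun _ hε => ⟨fun _ => ∅, empty_subset _, intMeasure_empty.trans_le hε.le⟩

theorem measurableSet_internalSet (A : ∀ i, Finset (X i)) :
    MeasurableSet (internalSet X ω A) :=
  MeasurableSpace.measurableSet_generateFrom ⟨A, by rw [symmDiff_self]; exact isNull_empty⟩

theorem measure_eq_zero_of_isNull {ν : Measure (UProd X ω)} (hν : IsLoebMeasure X ω ν)
    {N : Set (UProd X ω)} (hN : IsNull X ω N) : ν N = 0 := by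
  refine le_antisymm (ENNReal.le_of_forall_pos_le_add fun ε hε _ => ?_) zero_le
  obtain ⟨A, hNA, hA⟩ := hN ε hε
  calc ν N ≤ ν (internalSet X ω A) := measure_mono hNA
    _ = ENNReal.ofReal (intMeasure X ω A) := hν.2 A
    _ ≤ 0 + ε := by
      rw [zero_add, ← ENNReal.ofReal_coe_nnreal]
      exact ENNReal.ofReal_le_ofReal hA

/-- At stage `i` take the largest `Dₖ` with `k ≤ i` whose density is still below
`s + 1/(k+1)`. -/
theorem exists_internalSet_iUnion_subset (hω : (ω : Filter ℕ) ≤ cofinite)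
    {D : ℕ → ∀ i, Finset (X i)} (hD : Monotone D) {s : ℝ} (hs₀ : 0 ≤ s)
    (hs : ∀ n, intMeasure X ω (D n) ≤ s) :
    ∃ E : ∀ i, Finset (X i), (∀ n, internalSet X ω (D n) ⊆ internalSet X ω E) ∧
      intMeasure X ω E ≤ s := by
  classical
  let P : ℕ → ℕ → Prop := fun i k => ((D k i).dens : ℝ) ≤ s + 1 / (k + 1)
  let K : ℕ → ℕ := fun i => Nat.findGreatest (P i) i
  have hK : ∀ i, P i (K i) := fun i => Nat.findGreatest_spec (Nat.zero_le i) <| by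
    have : ((D 0 i).dens : ℝ) ≤ 1 := by exact_mod_cast (D 0 i).dens_le_one
    show ((D 0 i).dens : ℝ) ≤ s + 1 / ((0 : ℕ) + 1)
    norm_num; linarith
  have hK_ge : ∀ n, ∀ᶠ i in (ω : Filter ℕ), n ≤ K i := by
    intro n
    have hlt : intMeasure X ω (D n) < s + 1 / (n + 1) := by
      linarith [hs n, Nat.one_div_pos_of_nat (α := ℝ) (n := n)]
    filter_upwards [eventually_ge_of_le_cofinite hω n,
      (tendsto_dens_intMeasure (D n)).eventually (gt_mem_nhds hlt)] with i hni hi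
    exact Nat.le_findGreatest hni hi.le
  refine ⟨fun i => D (K i) i, fun n x hx => ?_, ?_⟩
  · obtain ⟨p, rfl⟩ := x.exists_mk
    rw [mem_internalSet_mk] at hx ⊢
    filter_upwards [hx, hK_ge n] with i hi hni using hD hni i hi
  · have hK_top : Tendsto (fun i => (1 : ℝ) / (K i + 1)) ω (𝓝 0) :=
      tendsto_one_div_add_atTop_nhds_zero_nat.comp (tendsto_atTop.2 hK_ge)
    simpa using le_of_tendsto_of_tendsto' (tendsto_dens_intMeasure _)
      (tendsto_const_nhds.add hK_top) hK

theorem exists_internalSet_ae_eq_iUnion (hω : (ω : Filter ℕ) ≤ cofinite)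
    {ν : Measure (UProd X ω)} (hν : IsLoebMeasure X ω ν) (A : ℕ → ∀ i, Finset (X i)) :
    ∃ E : ∀ i, Finset (X i), (⋃ n, internalSet X ω (A n)) =ᵐ[ν] internalSet X ω E := by
  classical
  have := hν.1
  let D : ℕ → ∀ i, Finset (X i) := fun N i => (Finset.range (N + 1)).biUnion fun n => A n i
  have hD : Monotone D := fun M N hMN i =>
    Finset.biUnion_subset_biUnion_of_subset_left _ (Finset.range_subset_range.2 (by omega))
  set U := ⋃ n, internalSet X ω (A n)
  have hDU : ∀ N, internalSet X ω (D N) ⊆ U := fun N => by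
    rw [internalSet_biUnion]
    exact iUnion₂_subset_iUnion _ _
  have hDν : ∀ N, intMeasure X ω (D N) ≤ (ν U).toReal := fun N =>
    (ENNReal.ofReal_le_iff_le_toReal (measure_ne_top ν U)).1
      ((hν.2 (D N)).symm.trans_le (measure_mono (hDU N)))
  obtain ⟨E, hDE, hE⟩ := exists_internalSet_iUnion_subset hω hD ENNReal.toReal_nonneg hDν
  refine ⟨E, ae_eq_of_subset_of_measure_ge ?_ ?_
    (MeasurableSet.iUnion fun n => measurableSet_internalSet (A n)).nullMeasurableSet
    (measure_ne_top ν _)⟩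
  · refine iUnion_subset fun n => (internalSet_mono fun i => ?_).trans (hDE n)
    exact Finset.subset_biUnion_of_mem (fun n => A n i) (Finset.self_mem_range_succ n)
  · rw [hν.2 E]
    exact ENNReal.ofReal_le_of_le_toReal hE

theorem exists_internalSet_ae_eq (hω : (ω : Filter ℕ) ≤ cofinite)
    {ν : Measure (UProd X ω)} (hν : IsLoebMeasure X ω ν) {B : Set (UProd X ω)}
    (hB : MeasurableSet B) : ∃ A : ∀ i, Finset (X i), B =ᵐ[ν] internalSet X ω A := by
  classical
  induction B, hB using MeasurableSpace.generateFrom_induction with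
  | hC t ht =>
    obtain ⟨A, hA⟩ := ht
    exact ⟨A, measure_symmDiff_eq_zero_iff.1 (measure_eq_zero_of_isNull hν hA)⟩
  | empty => exact ⟨fun _ => ∅, by rw [internalSet_empty]; exact EventuallyEq.rfl⟩
  | compl t _ ht =>
    obtain ⟨A, hA⟩ := ht
    exact ⟨fun i => (A i)ᶜ, by rw [internalSet_compl]; exact hA.compl⟩
  | iUnion t _ ht =>
    choose A hA using ht
    obtain ⟨E, hE⟩ := exists_internalSet_ae_eq_iUnion hω hν A
    exact ⟨E, (Filter.EventuallyEq.countable_iUnion hA).trans hE⟩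

theorem exists_uprodFun_ae_eq_simpleFunc (hω : (ω : Filter ℕ) ≤ cofinite)
    {ν : Measure (UProd X ω)} (hν : IsLoebMeasure X ω ν) (s : SimpleFunc (UProd X ω) ℝ) :
    ∃ g : ∀ i, X i → ℝ, (∀ i q, g i q ∈ range s) ∧ ∀ᵐ x ∂ν, uprodFun X ω g x = s x := by
  classical
  have := hν.1
  obtain ⟨x₀⟩ := nonempty_of_isProbabilityMeasure ν
  choose A hA using fun b => exists_internalSet_ae_eq hω hν (s.measurableSet_fiber b)
  let g : ∀ i, X i → ℝ := fun i q =>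
    if h : ∃ b ∈ s.range, q ∈ A b i then h.choose else s x₀
  refine ⟨g, fun i q => ?_, ?_⟩
  · dsimp only [g]
    split_ifs with h
    exacts [SimpleFunc.mem_range.1 h.choose_spec.1, mem_range_self x₀]
  have hA_fiber : ∀ᵐ x ∂ν, ∀ b ∈ s.range, (s x = b ↔ x ∈ internalSet X ω (A b)) := by
    rw [eventually_all_finset]
    exact fun b _ => (hA b).mem_iff
  filter_upwards [hA_fiber] with x hx
  obtain ⟨p, rfl⟩ := x.exists_mk
  have hp : ∀ᶠ i in (ω : Filter ℕ), ∀ b ∈ s.range, (p i ∈ A b i ↔ s (UProd.mk p) = b) := by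
    rw [eventually_all_finset]
    intro b hb
    filter_upwards [eventually_mem_iff_mem_internalSet (A b) p] with i hi
    rw [hi, hx b hb]
  refine uprodFun_mk_eq_of_eventually_eq (hp.mono fun i hi => ?_)
  have hex : ∃ b ∈ s.range, p i ∈ A b i :=
    ⟨_, s.mem_range_self _, (hi _ (s.mem_range_self _)).2 rfl⟩
  simp only [g, dif_pos hex]
  exact ((hi _ hex.choose_spec.1).1 hex.choose_spec.2).symm

end Loeb

theorem exists_simpleFunc_abs_sub_le {α : Type*} [MeasurableSpace α] {f : α → ℝ}
    (hf : Measurable f) {a b : ℝ} (hfab : ∀ x, f x ∈ Icc a b) {ε : ℝ} (hε : 0 < ε) :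
    ∃ s : SimpleFunc α ℝ, (∀ x, s x ∈ Icc a b) ∧ ∀ x, |s x - f x| ≤ ε := by
  let k : α → ℕ := fun x => ⌊(f x - a) / ε⌋₊
  have hk_le : ∀ x, k x ≤ ⌊(b - a) / ε⌋₊ := fun x =>
    Nat.floor_le_floor (div_le_div_of_nonneg_right (by linarith [(hfab x).2]) hε.le)
  let kₛ : SimpleFunc α ℕ :=
    ⟨k, fun n => ((hf.sub_const a).div_const ε).nat_floor (measurableSet_singleton n),
      (finite_Iic _).subset (range_subset_iff.2 hk_le)⟩
  have hk : ∀ x, a + kₛ x * ε ≤ f x ∧ f x < a + kₛ x * ε + ε := fun x => by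
    have hfa : 0 ≤ (f x - a) / ε := div_nonneg (by linarith [(hfab x).1]) hε.le
    show a + (⌊(f x - a) / ε⌋₊ : ℝ) * ε ≤ f x ∧ f x < a + (⌊(f x - a) / ε⌋₊ : ℝ) * ε + ε
    constructor
    · linarith [(le_div_iff₀ hε).1 (Nat.floor_le hfa)]
    · linarith [(div_lt_iff₀ hε).1 (Nat.lt_floor_add_one ((f x - a) / ε))]
  refine ⟨kₛ.map fun n : ℕ => a + n * ε, fun x => ⟨?_, ?_⟩, fun x => abs_le.2 ⟨?_, ?_⟩⟩ <;>
    simp only [SimpleFunc.map_apply]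
  · exact le_add_of_nonneg_right (by positivity)
  · exact (hk x).1.trans (hfab x).2
  · linarith [hk x]
  · linarith [hk x]

theorem abs_sub_le_of_abs_succ_sub_le_geometric {a : ℕ → ℝ} {n m : ℕ} (hnm : n ≤ m)
    (h : ∀ l, n ≤ l → l < m → |a (l + 1) - a l| ≤ 2 * (1 / 2 : ℝ) ^ l) :
    |a m - a n| ≤ 4 * (1 / 2 : ℝ) ^ n - 4 * (1 / 2 : ℝ) ^ m := by
  induction m, hnm using Nat.le_induction with
  | base => simp
  | succ m hnm ih =>
    have h₁ := ih fun l hnl hlm => h l hnl (by omega)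
    have h₂ := h m hnm (by omega)
    have h₃ := abs_sub_le (a (m + 1)) (a m) (a n)
    rw [pow_succ]
    linarith

section Diagonal

variable {X : ℕ → Type} {ω : Ultrafilter ℕ}

open Classical in
noncomputable def diagonalFamily (h : ℕ → ∀ i, X i → ℝ) : ∀ i, X i → ℝ := fun i q =>
  h (Nat.findGreatest (fun n => ∀ l < n, |h (l + 1) i q - h l i q| ≤ 2 * (1 / 2 : ℝ) ^ l) i) i q

theorem eventually_abs_sub_le_of_uprodFun {h : ℕ → ∀ i, X i → ℝ} {a b : ℝ}
    (hab : ∀ n i q, h n i q ∈ Icc a b) {p : ∀ i, X i} {y : ℝ}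
    (hp : ∀ n, |uprodFun X ω (h n) (UProd.mk p) - y| ≤ (1 / 2 : ℝ) ^ n) :
    (∀ n, ∀ᶠ i in (ω : Filter ℕ), |h n i (p i) - y| ≤ 2 * (1 / 2 : ℝ) ^ n) ∧
      ∀ l, ∀ᶠ i in (ω : Filter ℕ), |h (l + 1) i (p i) - h l i (p i)| ≤ 2 * (1 / 2 : ℝ) ^ l := by
  have hlim := fun n => tendsto_uprodFun_mk (ω := ω) (hab n) p
  refine ⟨fun n => ?_, fun l => ?_⟩
  · have hlt : |uprodFun X ω (h n) (UProd.mk p) - y| < 2 * (1 / 2 : ℝ) ^ n := by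
      linarith [hp n, pow_pos (one_half_pos (α := ℝ)) n]
    filter_upwards [((hlim n).sub_const y).abs.eventually (gt_mem_nhds hlt)] with i hi
    exact hi.le
  · have hlt : |uprodFun X ω (h (l + 1)) (UProd.mk p) - uprodFun X ω (h l) (UProd.mk p)| <
        2 * (1 / 2 : ℝ) ^ l :=
      calc _ ≤ |uprodFun X ω (h (l + 1)) (UProd.mk p) - y| +
              |y - uprodFun X ω (h l) (UProd.mk p)| := abs_sub_le _ _ _
        _ ≤ (1 / 2 : ℝ) ^ (l + 1) + (1 / 2 : ℝ) ^ l :=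
          add_le_add (hp (l + 1)) (abs_sub_comm y _ ▸ hp l)
        _ < 2 * (1 / 2 : ℝ) ^ l := by
          rw [pow_succ]
          linarith [pow_pos (one_half_pos (α := ℝ)) l]
    filter_upwards [((hlim (l + 1)).sub (hlim l)).abs.eventually (gt_mem_nhds hlt)] with i hi
    exact hi.le

theorem uprodFun_diagonalFamily (hω : (ω : Filter ℕ) ≤ cofinite) {h : ℕ → ∀ i, X i → ℝ}
    {a b : ℝ} (hab : ∀ n i q, h n i q ∈ Icc a b) {x : UProd X ω} {y : ℝ}
    (hx : ∀ n, |uprodFun X ω (h n) x - y| ≤ (1 / 2 : ℝ) ^ n) :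
    uprodFun X ω (diagonalFamily h) x = y := by
  classical
  obtain ⟨p, rfl⟩ := x.exists_mk
  obtain ⟨hnear, hstep⟩ := eventually_abs_sub_le_of_uprodFun hab hx
  have hclose : ∀ n, ∀ᶠ i in (ω : Filter ℕ),
      |diagonalFamily h i (p i) - y| ≤ 6 * (1 / 2 : ℝ) ^ n := by
    intro n
    have hsteps : ∀ᶠ i in (ω : Filter ℕ), ∀ l ∈ Finset.range n,
        |h (l + 1) i (p i) - h l i (p i)| ≤ 2 * (1 / 2 : ℝ) ^ l :=
      (eventually_all_finset _).2 fun l _ => hstep l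
    filter_upwards [eventually_ge_of_le_cofinite hω n, hsteps, hnear n] with i hni hi hin
    let P : ℕ → Prop := fun m =>
      ∀ l < m, |h (l + 1) i (p i) - h l i (p i)| ≤ 2 * (1 / 2 : ℝ) ^ l
    set M := Nat.findGreatest P i
    have hnM : n ≤ M := Nat.le_findGreatest hni fun l hl => hi l (Finset.mem_range.2 hl)
    have hM : P M := Nat.findGreatest_spec (Nat.zero_le i) (by simp [P])
    have htel := abs_sub_le_of_abs_succ_sub_le_geometric (a := fun m => h m i (p i)) hnM
      fun l _ hl => hM l hl
    have := abs_sub_le (h M i (p i)) (h n i (p i)) y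
    have := pow_nonneg (one_half_pos (α := ℝ)).le M
    show |h M i (p i) - y| ≤ _
    linarith
  have hle : ∀ n, |uprodFun X ω (diagonalFamily h) (UProd.mk p) - y| ≤ 6 * (1 / 2 : ℝ) ^ n :=
    fun n => le_of_tendsto
      ((tendsto_uprodFun_mk (fun i q => hab _ i q) p).sub_const y).abs (hclose n)
  have h6 : Tendsto (fun n => 6 * (1 / 2 : ℝ) ^ n) atTop (𝓝 0) := by
    simpa using (tendsto_pow_atTop_nhds_zero_of_lt_one (r := (1 / 2 : ℝ))
      (by norm_num) (by norm_num)).const_mul 6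
  exact sub_eq_zero.1 (abs_nonpos_iff.1 (ge_of_tendsto' h6 hle))

end Diagonal

theorem loeb_measurable_eq_uprodFun_ae_general (X : ℕ → Type) [∀ i, Fintype (X i)]
    (ω : Ultrafilter ℕ) (hω : (ω : Filter ℕ) ≤ Filter.cofinite)
    (d : ℝ) (f : UProd X ω → ℝ) (hb : ∀ x, f x ∈ Set.Icc (-d) d)
    (hm : Measurable[loebSpace X ω] f)
    (ν : @MeasureTheory.Measure (UProd X ω) (loebSpace X ω))
    (hν : IsLoebMeasure X ω ν) :
    ∃ g : ∀ i, X i → ℝ, (∀ i p, g i p ∈ Set.Icc (-d) d) ∧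
      ∀ᵐ x ∂ν, uprodFun X ω g x = f x := by
  choose s hs_mem hs_approx using
    fun n : ℕ => exists_simpleFunc_abs_sub_le hm hb (pow_pos (one_half_pos (α := ℝ)) n)
  choose h hh_range hh_ae using fun n => exists_uprodFun_ae_eq_simpleFunc hω hν (s n)
  have hh_mem : ∀ n i q, h n i q ∈ Icc (-d) d := fun n i q => by
    obtain ⟨x, hx⟩ := hh_range n i q
    exact hx ▸ hs_mem n x
  refine ⟨diagonalFamily h, fun i q => hh_mem _ i q, ?_⟩
  filter_upwards [ae_all_iff.2 hh_ae] with x hx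
  exact uprodFun_diagonalFamily hω hh_mem fun n => hx n ▸ hs_approx n x

/-- Every bounded Loeb-measurable function `f : X → [-d,d]` on the ultraproduct of finite
sets is almost everywhere (w.r.t. the Loeb measure) equal to an ultraproduct function:
there are functions `fᵢ : Xᵢ → [-d,d]` with `lim_ω fᵢ = f` μ-a.e. -/
theorem loeb_measurable_eq_uprodFun_ae (X : ℕ → Type) [∀ i, Fintype (X i)]
    (ω : Ultrafilter ℕ) (hω : (ω : Filter ℕ) ≤ Filter.cofinite)
    (hcard : StrictMono fun i => Fintype.card (X i))
    (d : ℝ) (f : UProd X ω → ℝ) (hb : ∀ x, f x ∈ Set.Icc (-d) d)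
    (hm : Measurable[loebSpace X ω] f)
    (ν : @MeasureTheory.Measure (UProd X ω) (loebSpace X ω))
    (hν : IsLoebMeasure X ω ν) :
    ∃ g : ∀ i, X i → ℝ, (∀ i p, g i p ∈ Set.Icc (-d) d) ∧
      ∀ᵐ x ∂ν, uprodFun X ω g x = f x :=
  loeb_measurable_eq_uprodFun_ae_general X ω hω d f hb hm ν hν
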